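/- Let c : C → X × X be a correspondence over a field k. For any two closed subsets Z₁, Z₂ ⊆ X we have G(c, Z₁ ∪ Z₂) ⊆ G(c, Z₁) ∪ G(c, Z₂). -/

import Mathlib

open AlgebraicGeometry CategoryTheory CategoryTheory.Limits TopologicalSpace Opposite

universe u

/-- A closed subset `Z ⊆ X` is `c`-invariant for a correspondence `c = (c₁, c₂) : C ⟶ X × X`
if `c₁(c₂⁻¹(Z)) ⊆ Z` set-theoretically. -/
def CorrInvariant {C X : Scheme.{u}} (c₁ c₂ : C ⟶ X) (Z : Set X) : Prop :=
  c₁.base '' (c₂.base ⁻¹' Z) ⊆ Z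

/-- `Z ∩ U ⊆ U` is `c|_U`-invariant, where `c|_U : c₁⁻¹(U) ∩ c₂⁻¹(U) → U × U` denotes the
restriction of the correspondence `c = (c₁, c₂)` to an open subset `U ⊆ X`. -/
def CorrRestrictInvariant {C X : Scheme.{u}} (c₁ c₂ : C ⟶ X) (Z U : Set X) : Prop :=
  c₁.base '' ((c₁.base ⁻¹' U ∩ c₂.base ⁻¹' U) ∩ c₂.base ⁻¹' (Z ∩ U)) ⊆ Z ∩ U

/-- `Z` is locally `c`-invariant: every point of `Z` has an open neighbourhood `U ⊆ X` such
that `Z ∩ U ⊆ U` is `c|_U`-invariant. -/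
def CorrLocallyInvariant {C X : Scheme.{u}} (c₁ c₂ : C ⟶ X) (Z : Set X) : Prop :=
  ∀ x ∈ Z, ∃ U : Set X, IsOpen U ∧ x ∈ U ∧ CorrRestrictInvariant c₁ c₂ Z U

/-- `Z ∩ U₀ ⊆ U₀` is locally `c|_{U₀}`-invariant: every point of `Z ∩ U₀` has an open
neighbourhood `U ⊆ U₀` such that `(Z ∩ U₀) ∩ U ⊆ U` is `c|_U`-invariant (the opens of the
open subscheme `U₀` being exactly the opens of `X` contained in `U₀`). -/
def CorrLocallyInvariantOn {C X : Scheme.{u}} (c₁ c₂ : C ⟶ X) (Z U₀ : Set X) : Prop :=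
  ∀ x ∈ Z ∩ U₀, ∃ U : Set X, IsOpen U ∧ U ⊆ U₀ ∧ x ∈ U ∧
    CorrRestrictInvariant c₁ c₂ (Z ∩ U₀) U

/-- `F(c, Z) := c₂⁻¹(Z) ∩ c₁⁻¹(X ∖ Z) ⊆ C`. -/
def corrF {C X : Scheme.{u}} (c₁ c₂ : C ⟶ X) (Z : Set X) : Set C :=
  c₂.base ⁻¹' Z ∩ c₁.base ⁻¹' (Set.univ \ Z)

/-- `G(c, Z) := ⋃_S cl(c₁(S)) ∩ cl(c₂(S)) ⊆ X`, the union over the irreducible components `S`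
of `F(c, Z)` (i.e. the maximal irreducible subsets of `F(c, Z)`). -/
def corrG {C X : Scheme.{u}} (c₁ c₂ : C ⟶ X) (Z : Set X) : Set X :=
  ⋃ S ∈ {S : Set C | Maximal (fun T : Set C => T ⊆ corrF c₁ c₂ Z ∧ IsIrreducible T) S},
    closure (c₁.base '' S) ∩ closure (c₂.base '' S)

/-! An irreducible component `S` of `F(c, Z₁ ∪ Z₂)` lies in `c₂⁻¹(Z₁) ∪ c₂⁻¹(Z₂)`, a union of two
closed sets, so by irreducibility it lies in one of them, say `c₂⁻¹(Z₁)`; then `S ⊆ F(c, Z₁)`.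
By Zorn's lemma `S` is contained in an irreducible component `S'` of `F(c, Z₁)`, and the
contribution `cl(c₁(S)) ∩ cl(c₂(S))` of `S` to `G(c, Z₁ ∪ Z₂)` is contained in that of `S'`. -/

section Irreducible

variable {α : Type*} [TopologicalSpace α]

theorem IsPreirreducible.sUnion_of_isChain {c : Set (Set α)} (hc : IsChain (· ⊆ ·) c)
    (h : ∀ t ∈ c, IsPreirreducible t) : IsPreirreducible (⋃₀ c) := by
  rintro u v hu hv ⟨x, ⟨s, hs, hxs⟩, hxu⟩ ⟨y, ⟨t, ht, hyt⟩, hyv⟩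
  rcases hc.total hs ht with hst | hts
  · obtain ⟨z, hzt, hz⟩ := h t ht u v hu hv ⟨x, hst hxs, hxu⟩ ⟨y, hyt, hyv⟩
    exact ⟨z, Set.mem_sUnion_of_mem hzt ht, hz⟩
  · obtain ⟨z, hzs, hz⟩ := h s hs u v hu hv ⟨x, hxs, hxu⟩ ⟨y, hts hyt, hyv⟩
    exact ⟨z, Set.mem_sUnion_of_mem hzs hs, hz⟩

theorem exists_maximal_isIrreducible_subset {F S : Set α} (hSF : S ⊆ F) (hS : IsIrreducible S) :
    ∃ m, S ⊆ m ∧ Maximal (fun T : Set α => T ⊆ F ∧ IsIrreducible T) m := by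
  obtain ⟨m, hSm, hm⟩ := zorn_subset_nonempty {T : Set α | T ⊆ F ∧ IsIrreducible T}
    (fun c hcF hc ⟨t, ht⟩ =>
      ⟨⋃₀ c,
        ⟨Set.sUnion_subset fun t ht => (hcF ht).1,
          (hcF ht).2.nonempty.mono (Set.subset_sUnion_of_mem ht),
          IsPreirreducible.sUnion_of_isChain hc fun t ht => (hcF ht).2.isPreirreducible⟩,
        fun _ => Set.subset_sUnion_of_mem⟩)
    S ⟨hSF, hS⟩
  exact ⟨m, hSm, hm⟩

end Irreducible

section Correspondence

variable {C X : Scheme.{u}} (c₁ c₂ : C ⟶ X)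

theorem corrF_inter_preimage_subset {Z W : Set X} (hZW : Z ⊆ W) :
    corrF c₁ c₂ W ∩ c₂.base ⁻¹' Z ⊆ corrF c₁ c₂ Z :=
  fun _ ⟨⟨_, _, hW⟩, hZ⟩ => ⟨hZ, trivial, fun h => hW (hZW h)⟩

theorem closure_image_inter_subset_corrG {S : Set C} {Z : Set X} (hSF : S ⊆ corrF c₁ c₂ Z)
    (hS : IsIrreducible S) :
    closure (c₁.base '' S) ∩ closure (c₂.base '' S) ⊆ corrG c₁ c₂ Z := by
  obtain ⟨m, hSm, hm⟩ := exists_maximal_isIrreducible_subset hSF hS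
  exact fun _ hx => Set.mem_biUnion hm
    ⟨closure_mono (Set.image_mono hSm) hx.1, closure_mono (Set.image_mono hSm) hx.2⟩

end Correspondence

theorem corrG_union_subset_general
    {k : Type u} [Field k]
    (X C : Scheme.{u}) (sX : X ⟶ Spec (CommRingCat.of k))
    (c : C ⟶ pullback sX sX)
    (Z₁ Z₂ : Set X) (hZ₁ : IsClosed Z₁) (hZ₂ : IsClosed Z₂) :
    corrG (c ≫ pullback.fst sX sX) (c ≫ pullback.snd sX sX) (Z₁ ∪ Z₂) ⊆
      corrG (c ≫ pullback.fst sX sX) (c ≫ pullback.snd sX sX) Z₁ ∪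
        corrG (c ≫ pullback.fst sX sX) (c ≫ pullback.snd sX sX) Z₂ := by
  set c₁ := c ≫ pullback.fst sX sX
  set c₂ := c ≫ pullback.snd sX sX
  intro x hx
  obtain ⟨S, ⟨⟨hSF, hS⟩, -⟩, hxS⟩ := Set.mem_iUnion₂.mp hx
  have hcover : S ⊆ c₂.base ⁻¹' Z₁ ∪ c₂.base ⁻¹' Z₂ := fun p hp => (hSF hp).1
  rcases isPreirreducible_iff_isClosed_union_isClosed.mp hS.isPreirreducible _ _
    (hZ₁.preimage c₂.base.hom.continuous) (hZ₂.preimage c₂.base.hom.continuous) hcover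
    with h₁ | h₂
  · exact Or.inl <| closure_image_inter_subset_corrG c₁ c₂
      (fun p hp => corrF_inter_preimage_subset c₁ c₂ Set.subset_union_left ⟨hSF hp, h₁ hp⟩)
      hS hxS
  · exact Or.inr <| closure_image_inter_subset_corrG c₁ c₂
      (fun p hp => corrF_inter_preimage_subset c₁ c₂ Set.subset_union_right ⟨hSF hp, h₂ hp⟩)
      hS hxS

/-- **Corollary 1.7(b).**  Let `c : C ⟶ X ×_k X` be a correspondence between schemes of
finite type over a field `k`.  For any two closed subsets `Z₁, Z₂ ⊆ X` we have
`G(c, Z₁ ∪ Z₂) ⊆ G(c, Z₁) ∪ G(c, Z₂)`. -/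
theorem corrG_union_subset
    {k : Type u} [Field k]
    (X C : Scheme.{u}) (sX : X ⟶ Spec (CommRingCat.of k)) (sC : C ⟶ Spec (CommRingCat.of k))
    [LocallyOfFiniteType sX] [QuasiCompact sX] [LocallyOfFiniteType sC] [QuasiCompact sC]
    (c : C ⟶ pullback sX sX)
    (Z₁ Z₂ : Set X) (hZ₁ : IsClosed Z₁) (hZ₂ : IsClosed Z₂) :
    corrG (c ≫ pullback.fst sX sX) (c ≫ pullback.snd sX sX) (Z₁ ∪ Z₂) ⊆
      corrG (c ≫ pullback.fst sX sX) (c ≫ pullback.snd sX sX) Z₁ ∪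
        corrG (c ≫ pullback.fst sX sX) (c ≫ pullback.snd sX sX) Z₂ :=
  corrG_union_subset_general X C sX c Z₁ Z₂ hZ₁ hZ₂
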